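/- Let ε₁ ∈ [0,1]. Suppose there exist a bounded Borel measurable function v : 𝒳̂ → ℝ and a bounded Borel measurable function w : 𝒳̂ → ℝ such that: v(x) ≤ 1 − ε₁ for all x ∈ 𝒳₀; v(x) ≥ 𝔼^∞[v(φ_π^{x}(1))] for all x ∈ 𝒳; v(x) ≥ 𝔼^∞[w(φ_π^{x}(1))] − w(x) for all x ∈ 𝒳; and v(x) ≥ 1 for all x ∈ 𝒳̂ ∖ 𝒳. Then for every x₀ ∈ 𝒳, ℙ^∞(∃k ∈ ℕ: φ_π^{x₀}(k) ∈ 𝒳̂ ∖ 𝒳 and ∀i ∈ ℕ with i ≤ k−1: φ_π^{x₀}(i) ∈ 𝒳) ≤ v(x₀); in particular, for every x₀ ∈ 𝒳₀ this probability is at most 1 − ε₁, and consequently ℙ^∞(∀k ∈ ℕ: φ_π^{x₀}(k) ∈ 𝒳) ≥ ε₁ for every x₀ ∈ 𝒳₀. -/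

import Mathlib

open MeasureTheory Filter Topology

noncomputable section

/-- Trajectory of the discrete-time system `x(l+1) = f(x(l), d(l))` under the
disturbance sequence `π`, starting from `x0`. -/
def traj {n m : ℕ} (f : (Fin n → ℝ) → (Fin m → ℝ) → (Fin n → ℝ))
    (x0 : Fin n → ℝ) (π : ℕ → Fin m → ℝ) : ℕ → Fin n → ℝ
  | 0 => x0
  | k + 1 => f (traj f x0 π k) (π k)

attribute [local instance] Classical.propDecidable

private lemma traj_congr {n m : ℕ} (f : (Fin n → ℝ) → (Fin m → ℝ) → (Fin n → ℝ))
    (x0 : Fin n → ℝ) (π π' : ℕ → Fin m → ℝ) :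
    ∀ k, (∀ i, i < k → π i = π' i) → traj f x0 π k = traj f x0 π' k := by
  intro k
  induction k with
  | zero => intro; rfl
  | succ k ih =>
    intro h
    show f (traj f x0 π k) (π k) = f (traj f x0 π' k) (π' k)
    rw [ih (fun i hi => h i (by omega)), h k (by omega)]

private lemma traj_shift {n m : ℕ} (f : (Fin n → ℝ) → (Fin m → ℝ) → (Fin n → ℝ))
    (x0 : Fin n → ℝ) (π : ℕ → Fin m → ℝ) :
    ∀ k, traj f x0 π (k + 1) = traj f (f x0 (π 0)) (fun i => π (i + 1)) k := by
  intro k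
  induction k with
  | zero => rfl
  | succ k ih =>
    show f (traj f x0 π (k+1)) (π (k+1)) = f (traj f (f x0 (π 0)) (fun i => π (i+1)) k) (π (k+1))
    rw [ih]

private lemma traj_measurable {n m : ℕ} {f : (Fin n → ℝ) → (Fin m → ℝ) → (Fin n → ℝ)}
    (hf : Measurable fun p : (Fin n → ℝ) × (Fin m → ℝ) => f p.1 p.2)
    (x0 : Fin n → ℝ) (k : ℕ) :
    Measurable fun π : ℕ → Fin m → ℝ => traj f x0 π k := by
  induction k with
  | zero => exact measurable_const
  | succ k ih => exact hf.comp (ih.prodMk (measurable_pi_apply k))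

/-- extend a finite disturbance tuple to an infinite one by `0`. -/
private def extSeq {m N : ℕ} (q : Fin N → Fin m → ℝ) : ℕ → Fin m → ℝ :=
  fun i => if h : i < N then q ⟨i, h⟩ else 0

private lemma traj_ext_measurable {n m : ℕ} {f : (Fin n → ℝ) → (Fin m → ℝ) → (Fin n → ℝ)}
    (hf : Measurable fun p : (Fin n → ℝ) × (Fin m → ℝ) => f p.1 p.2)
    (x0 : Fin n → ℝ) (N k : ℕ) :
    Measurable fun q : Fin N → Fin m → ℝ => traj f x0 (extSeq q) k := by
  induction k with
  | zero => exact measurable_const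
  | succ k ih =>
    have he : Measurable fun q : Fin N → Fin m → ℝ => extSeq q k := by
      by_cases h : k < N
      · simp only [extSeq, dif_pos h]; exact measurable_pi_apply _
      · simp only [extSeq, dif_neg h]; exact measurable_const
    exact hf.comp (ih.prodMk he)

private lemma extSeq_cons_shift {m N : ℕ} (d : Fin m → ℝ) (q : Fin N → Fin m → ℝ) :
    (fun i => extSeq (Fin.cons d q : Fin (N+1) → Fin m → ℝ) (i + 1)) = extSeq q := by
  funext i
  by_cases h : i < N
  · have h' : i + 1 < N + 1 := by omega
    simp only [extSeq, dif_pos h, dif_pos h']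
    have : (⟨i + 1, h'⟩ : Fin (N+1)) = Fin.succ ⟨i, h⟩ := rfl
    rw [this, Fin.cons_succ]
  · have h' : ¬ (i + 1 < N + 1) := by omega
    simp only [extSeq, dif_neg h, dif_neg h']

private lemma extSeq_cons_zero {m N : ℕ} (d : Fin m → ℝ) (q : Fin N → Fin m → ℝ) :
    extSeq (Fin.cons d q : Fin (N+1) → Fin m → ℝ) 0 = d := by
  simp [extSeq]

/-- the event (in the first `N` disturbances) that the trajectory exits `X` into `E`
within the first `N - 1` steps, staying in `X` beforehand. -/
private def exitSet {n m : ℕ} (f : (Fin n → ℝ) → (Fin m → ℝ) → (Fin n → ℝ))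
    (X E : Set (Fin n → ℝ)) (x0 : Fin n → ℝ) (N : ℕ) : Set (Fin N → Fin m → ℝ) :=
  {q | ∃ k, k < N ∧ traj f x0 (extSeq q) k ∈ E ∧ ∀ i, i < k → traj f x0 (extSeq q) i ∈ X}

/-- `gfun N x` : probability of exiting within `N-1` steps starting from `x`. -/
private def gfun {n m : ℕ} (f : (Fin n → ℝ) → (Fin m → ℝ) → (Fin n → ℝ))
    (X E : Set (Fin n → ℝ)) (μ : Measure (Fin m → ℝ)) : ℕ → (Fin n → ℝ) → ENNReal
  | 0 => fun _ => 0
  | N + 1 => fun x =>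
      if x ∈ E then 1 else if x ∈ X then ∫⁻ d, gfun f X E μ N (f x d) ∂μ else 0

private def bfun {n m : ℕ} (f : (Fin n → ℝ) → (Fin m → ℝ) → (Fin n → ℝ))
    (X : Set (Fin n → ℝ)) (μ : Measure (Fin m → ℝ)) (v : (Fin n → ℝ) → ℝ) :
    ℕ → (Fin n → ℝ) → ℝ
  | 0 => fun x => if x ∈ X then v x else 0
  | N + 1 => fun x => if x ∈ X then ∫ d, bfun f X μ v N (f x d) ∂μ else 0

private def cfun {n m : ℕ} (f : (Fin n → ℝ) → (Fin m → ℝ) → (Fin n → ℝ))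
    (X : Set (Fin n → ℝ)) (μ : Measure (Fin m → ℝ)) (w : (Fin n → ℝ) → ℝ) :
    ℕ → (Fin n → ℝ) → ℝ
  | 0 => fun x => w x
  | N + 1 => fun x => if x ∈ X then ∫ d, cfun f X μ w N (f x d) ∂μ else w x

section meas
variable {n m : ℕ} {f : (Fin n → ℝ) → (Fin m → ℝ) → (Fin n → ℝ)}
    {X E : Set (Fin n → ℝ)} {v w : (Fin n → ℝ) → ℝ}
    {μ : Measure (Fin m → ℝ)} [SFinite μ]

private lemma gfun_measurable (hf : Measurable fun p : (Fin n → ℝ) × (Fin m → ℝ) => f p.1 p.2)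
    (hX : MeasurableSet X) (hE : MeasurableSet E) (N : ℕ) : Measurable (gfun f X E μ N) := by
  induction N with
  | zero => exact measurable_const
  | succ N ih =>
    refine Measurable.ite hE measurable_const (Measurable.ite hX ?_ measurable_const)
    exact Measurable.lintegral_prod_right (ih.comp hf)

private lemma bfun_measurable (hf : Measurable fun p : (Fin n → ℝ) × (Fin m → ℝ) => f p.1 p.2)
    (hX : MeasurableSet X) (hv : Measurable v) (N : ℕ) : Measurable (bfun f X μ v N) := by
  induction N with
  | zero => exact Measurable.ite hX hv measurable_const
  | succ N ih =>
    refine Measurable.ite hX ?_ measurable_const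
    exact (StronglyMeasurable.integral_prod_right'
      (ν := μ) ((ih.comp hf).stronglyMeasurable)).measurable

private lemma cfun_measurable (hf : Measurable fun p : (Fin n → ℝ) × (Fin m → ℝ) => f p.1 p.2)
    (hX : MeasurableSet X) (hw : Measurable w) (N : ℕ) : Measurable (cfun f X μ w N) := by
  induction N with
  | zero => exact hw
  | succ N ih =>
    refine Measurable.ite hX ?_ hw
    exact (StronglyMeasurable.integral_prod_right'
      (ν := μ) ((ih.comp hf).stronglyMeasurable)).measurable

private lemma exitSet_measurable (hf : Measurable fun p : (Fin n → ℝ) × (Fin m → ℝ) => f p.1 p.2)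
    (hX : MeasurableSet X) (hE : MeasurableSet E) (x0 : Fin n → ℝ) (N : ℕ) :
    MeasurableSet (exitSet f X E x0 N) := by
  have : exitSet f X E x0 N = ⋃ k ∈ {k : ℕ | k < N},
      ((fun q : Fin N → Fin m → ℝ => traj f x0 (extSeq q) k) ⁻¹' E ∩
        ⋂ i ∈ {i : ℕ | i < k}, (fun q => traj f x0 (extSeq q) i) ⁻¹' X) := by
    ext q
    simp only [exitSet, Set.mem_setOf_eq, Set.mem_iUnion, Set.mem_inter_iff, Set.mem_preimage,
      Set.mem_iInter]
    tauto
  rw [this]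
  refine MeasurableSet.biUnion (Set.to_countable _) fun k _ => ?_
  refine ((traj_ext_measurable hf x0 N k) hE).inter ?_
  exact MeasurableSet.biInter (Set.to_countable _) fun i _ =>
    (traj_ext_measurable hf x0 N i) hX

private lemma exitSet_cons_slice (hdisj : ∀ x ∈ X, x ∉ E) {x0 : Fin n → ℝ} (hx0 : x0 ∈ X)
    (d : Fin m → ℝ) (N : ℕ) :
    {q : Fin N → Fin m → ℝ | (Fin.cons d q : Fin (N+1) → Fin m → ℝ) ∈ exitSet f X E x0 (N+1)} =
      exitSet f X E (f x0 d) N := by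
  ext q
  have key : ∀ j, traj f x0 (extSeq (Fin.cons d q : Fin (N+1) → Fin m → ℝ)) (j + 1) =
      traj f (f x0 d) (extSeq q) j := by
    intro j
    rw [traj_shift, extSeq_cons_zero, extSeq_cons_shift]
  simp only [exitSet, Set.mem_setOf_eq]
  constructor
  · rintro ⟨k, hkN, hkE, hkX⟩
    rcases k with _ | k'
    · exact absurd hkE (hdisj x0 hx0)
    · refine ⟨k', by omega, by rw [← key]; exact hkE, fun i hi => ?_⟩
      rw [← key]; exact hkX (i+1) (by omega)
  · rintro ⟨k', hkN, hkE, hkX⟩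
    refine ⟨k' + 1, by omega, by rw [key]; exact hkE, fun i hi => ?_⟩
    rcases i with _ | i'
    · exact hx0
    · rw [key]; exact hkX i' (by omega)

private lemma pi_exitSet_eq_gfun [IsProbabilityMeasure μ]
    (hf : Measurable fun p : (Fin n → ℝ) × (Fin m → ℝ) => f p.1 p.2)
    (hX : MeasurableSet X) (hE : MeasurableSet E) (hdisj : ∀ x ∈ X, x ∉ E) :
    ∀ N (x0 : Fin n → ℝ),
      Measure.pi (fun _ : Fin N => μ) (exitSet f X E x0 N) = gfun f X E μ N x0 := by
  intro N
  induction N with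
  | zero =>
    intro x0
    have : exitSet f X E x0 0 = (∅ : Set (Fin 0 → Fin m → ℝ)) := by
      ext q; simp [exitSet]
    rw [this]
    simp [gfun]
  | succ N ih =>
    intro x0
    by_cases hxE : x0 ∈ E
    · have : exitSet f X E x0 (N+1) = Set.univ := by
        ext q
        simp only [exitSet, Set.mem_setOf_eq, Set.mem_univ, iff_true]
        exact ⟨0, by omega, hxE, fun i hi => absurd hi (by omega)⟩
      rw [this]
      simp [gfun, hxE]
    · by_cases hxX : x0 ∈ X
      · -- main case
        have hp := measurePreserving_piFinSuccAbove (fun _ : Fin (N+1) => μ) 0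
        set e := MeasurableEquiv.piFinSuccAbove (fun _ : Fin (N+1) => (Fin m → ℝ)) 0 with he
        set T : Set ((Fin m → ℝ) × (Fin N → Fin m → ℝ)) :=
          {p | (Fin.cons p.1 p.2 : Fin (N+1) → Fin m → ℝ) ∈ exitSet f X E x0 (N+1)} with hT
        have hconsm : Measurable fun p : (Fin m → ℝ) × (Fin N → Fin m → ℝ) =>
            (Fin.cons p.1 p.2 : Fin (N+1) → Fin m → ℝ) := by
          refine measurable_pi_iff.2 fun j => ?_
          refine Fin.cases ?_ (fun i => ?_) j
          · simpa [Fin.cons_zero] using measurable_fst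
          · simp only [Fin.cons_succ]; exact (measurable_pi_apply i).comp measurable_snd
        have hTm : MeasurableSet T :=
          hconsm (exitSet_measurable hf hX hE x0 (N+1))
        have hpre : e ⁻¹' T = exitSet f X E x0 (N+1) := by
          ext q
          have : e q = (q 0, fun j : Fin N => q (Fin.succAbove 0 j)) := by
            simp only [he, MeasurableEquiv.piFinSuccAbove]
            rfl
          simp only [Set.mem_preimage, this, hT, Set.mem_setOf_eq]
          have hq : (Fin.cons (q 0) (fun j : Fin N => q (Fin.succAbove 0 j)) :
              Fin (N+1) → Fin m → ℝ) = q := by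
            have : (fun j : Fin N => q (Fin.succAbove 0 j)) = Fin.tail q := by
              funext j; rw [Fin.zero_succAbove]; rfl
            rw [this, Fin.cons_self_tail]
          rw [hq]
        have step1 : Measure.pi (fun _ : Fin (N+1) => μ) (exitSet f X E x0 (N+1)) =
            (μ.prod (Measure.pi fun _ : Fin N => μ)) T := by
          rw [← hpre]
          exact hp.measure_preimage hTm.nullMeasurableSet
        rw [step1, Measure.prod_apply hTm]
        have hslice : ∀ d, (Prod.mk d ⁻¹' T) = exitSet f X E (f x0 d) N := fun d =>
          exitSet_cons_slice (f := f) (X := X) (E := E) hdisj hxX d N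
        calc ∫⁻ d, (Measure.pi fun _ : Fin N => μ) (Prod.mk d ⁻¹' T) ∂μ
            = ∫⁻ d, gfun f X E μ N (f x0 d) ∂μ := by
              refine lintegral_congr fun d => ?_
              rw [hslice d, ih]
          _ = gfun f X E μ (N+1) x0 := by simp [gfun, hxE, hxX]
      · have : exitSet f X E x0 (N+1) = (∅ : Set (Fin (N+1) → Fin m → ℝ)) := by
          ext q
          simp only [exitSet, Set.mem_setOf_eq, Set.mem_empty_iff_false, iff_false]
          rintro ⟨k, hkN, hkE, hkX⟩
          rcases k with _ | k'
          · exact hxE hkE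
          · exact hxX (hkX 0 (by omega))
        rw [this]
        simp [gfun, hxE, hxX]

end meas

/-- Proposition 5: equation-relaxation certificate lower-bounds the
liveness probability. -/
theorem statement_8 {n m : ℕ}
    (f : (Fin n → ℝ) → (Fin m → ℝ) → (Fin n → ℝ))
    (hf : Measurable fun p : (Fin n → ℝ) × (Fin m → ℝ) => f p.1 p.2)
    (D : Set (Fin m → ℝ)) (hD : MeasurableSet D)
    (μ : Measure (Fin m → ℝ)) [IsProbabilityMeasure μ] (hμD : μ D = 1)
    (Pinf : Measure (ℕ → Fin m → ℝ)) [IsProbabilityMeasure Pinf]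
    (hPinf : ∀ (s : Finset ℕ) (B : ℕ → Set (Fin m → ℝ)), (∀ i, MeasurableSet (B i)) →
      Pinf {π : ℕ → Fin m → ℝ | ∀ i ∈ s, π i ∈ B i} = ∏ i ∈ s, μ (B i))
    (X X0 Xhat : Set (Fin n → ℝ))
    (hX : MeasurableSet X) (hX0 : MeasurableSet X0) (hXhat : MeasurableSet Xhat)
    (hX0X : X0 ⊆ X) (hXXhat : X ⊆ Xhat)
    (hreach : ∀ x ∈ X, ∀ d ∈ D, f x d ∈ Xhat)
    (ε₁ : ℝ) (hε₁ : ε₁ ∈ Set.Icc (0 : ℝ) 1)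
    (v w : (Fin n → ℝ) → ℝ) (hv : Measurable v) (hw : Measurable w)
    (hvb : ∃ C, ∀ x ∈ Xhat, |v x| ≤ C) (hwb : ∃ C, ∀ x ∈ Xhat, |w x| ≤ C)
    (h1 : ∀ x ∈ X0, v x ≤ 1 - ε₁)
    (h2 : ∀ x ∈ X, (∫ d in D, v (f x d) ∂μ) ≤ v x)
    (h3 : ∀ x ∈ X, (∫ d in D, w (f x d) ∂μ) - w x ≤ v x)
    (h4 : ∀ x ∈ Xhat \ X, 1 ≤ v x) :
    (∀ x0 ∈ X,
      (Pinf {π : ℕ → Fin m → ℝ |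
          ∃ k : ℕ, traj f x0 π k ∈ Xhat \ X ∧ ∀ i < k, traj f x0 π i ∈ X}).toReal
        ≤ v x0) ∧
    ∀ x0 ∈ X0,
      (Pinf {π : ℕ → Fin m → ℝ |
          ∃ k : ℕ, traj f x0 π k ∈ Xhat \ X ∧ ∀ i < k, traj f x0 π i ∈ X}).toReal
        ≤ 1 - ε₁ ∧
      ε₁ ≤ (Pinf {π : ℕ → Fin m → ℝ | ∀ k : ℕ, traj f x0 π k ∈ X}).toReal := by
  classical
  obtain ⟨Cv0, hCv0⟩ := hvb
  obtain ⟨Cw0, hCw0⟩ := hwb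
  set Cv : ℝ := max Cv0 0 with hCvdef
  set Cw : ℝ := max Cw0 0 with hCwdef
  have hCv : ∀ x ∈ Xhat, |v x| ≤ Cv := fun x hx => (hCv0 x hx).trans (le_max_left _ _)
  have hCw : ∀ x ∈ Xhat, |w x| ≤ Cw := fun x hx => (hCw0 x hx).trans (le_max_left _ _)
  have hCvpos : 0 ≤ Cv := le_max_right _ _
  have hCwpos : 0 ≤ Cw := le_max_right _ _
  have hEm : MeasurableSet (Xhat \ X) := hXhat.diff hX
  have hdisj : ∀ x ∈ X, x ∉ Xhat \ X := fun x hx h => h.2 hx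
  have hXE : ∀ x ∈ Xhat, x ∉ X → x ∈ Xhat \ X := fun x hx h => ⟨hx, h⟩
  have hDc : μ Dᶜ = 0 := by
    rw [measure_compl hD (measure_ne_top _ _), hμD, measure_univ, tsub_self]
  have hDae : ∀ᵐ d ∂μ, d ∈ D := by
    rw [ae_iff]
    exact hDc
  have hDr : μ.restrict D = μ := Measure.restrict_eq_self_of_ae_mem hDae
  have h2' : ∀ x ∈ X, (∫ d, v (f x d) ∂μ) ≤ v x := by
    intro x hx; have := h2 x hx; rwa [hDr] at this
  have h3' : ∀ x ∈ X, (∫ d, w (f x d) ∂μ) - w x ≤ v x := by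
    intro x hx; have := h3 x hx; rwa [hDr] at this
  have hfx : ∀ x : Fin n → ℝ, Measurable fun d => f x d :=
    fun x => hf.comp measurable_prodMk_left
  -- integrability of bounded measurable compositions
  have hint : ∀ (h : (Fin n → ℝ) → ℝ) (C : ℝ), Measurable h → (∀ y ∈ Xhat, |h y| ≤ C) →
      ∀ x ∈ X, Integrable (fun d => h (f x d)) μ := by
    intro h C hh hbd x hx
    refine Integrable.mono' (integrable_const C) ((hh.comp (hfx x)).aestronglyMeasurable) ?_
    exact hDae.mono fun d hd => by
      rw [Real.norm_eq_abs]; exact hbd _ (hreach x hx d hd)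
  have hnormint : ∀ (h : (Fin n → ℝ) → ℝ) (C : ℝ), (0 ≤ C) → (∀ y ∈ Xhat, |h y| ≤ C) →
      ∀ x ∈ X, |∫ d, h (f x d) ∂μ| ≤ C := by
    intro h C hC hbd x hx
    have := norm_integral_le_of_norm_le_const (μ := μ) (f := fun d => h (f x d)) (C := C)
      (hDae.mono fun d hd => by rw [Real.norm_eq_abs]; exact hbd _ (hreach x hx d hd))
    rwa [probReal_univ, mul_one, Real.norm_eq_abs] at this
  -- bounds on bfun and cfun
  have hbb : ∀ N, ∀ x ∈ Xhat, |bfun f X μ v N x| ≤ Cv := by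
    intro N
    induction N with
    | zero =>
      intro x hx
      by_cases h : x ∈ X
      · simpa [bfun, h] using hCv x hx
      · simpa [bfun, h] using hCvpos
    | succ N ih =>
      intro x hx
      by_cases h : x ∈ X
      · simp only [bfun, if_pos h]
        exact hnormint _ Cv hCvpos ih x h
      · simpa [bfun, h] using hCvpos
  have hcB : ∀ N, ∀ x ∈ Xhat, |cfun f X μ w N x| ≤ Cw := by
    intro N
    induction N with
    | zero => intro x hx; simpa [cfun] using hCw x hx
    | succ N ih =>
      intro x hx
      by_cases h : x ∈ X
      · simp only [cfun, if_pos h]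
        exact hnormint _ Cw hCwpos ih x h
      · simpa [cfun, h] using hCw x hx
  -- bfun ≤ v on Xhat
  have hbv : ∀ N, ∀ x ∈ Xhat, bfun f X μ v N x ≤ v x := by
    intro N
    induction N with
    | zero =>
      intro x hx
      by_cases h : x ∈ X
      · simp [bfun, h]
      · have := h4 x (hXE x hx h)
        simp only [bfun, if_neg h]
        linarith
    | succ N ih =>
      intro x hx
      by_cases h : x ∈ X
      · simp only [bfun, if_pos h]
        refine le_trans ?_ (h2' x h)
        refine integral_mono_ae
          (hint _ Cv (bfun_measurable hf hX hv N) (fun y hy => hbb N y hy) x h)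
          (hint _ Cv hv hCv x h) ?_
        exact hDae.mono fun d hd => ih _ (hreach x h d hd)
      · have := h4 x (hXE x hx h)
        simp only [bfun, if_neg h]
        linarith
  -- cfun difference bound
  have hcd : ∀ N, ∀ x ∈ Xhat,
      cfun f X μ w (N+1) x - cfun f X μ w N x ≤ bfun f X μ v N x := by
    intro N
    induction N with
    | zero =>
      intro x hx
      by_cases h : x ∈ X
      · have e1 : cfun f X μ w 1 x = ∫ d, w (f x d) ∂μ := by simp [cfun, h]
        have e2 : bfun f X μ v 0 x = v x := by simp [bfun, h]
        rw [e1, e2]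
        simp only [cfun]
        linarith [h3' x h]
      · simp [cfun, bfun, h]
    | succ N ih =>
      intro x hx
      by_cases h : x ∈ X
      · have e1 : ∀ M, cfun f X μ w (M+1) x = ∫ d, cfun f X μ w M (f x d) ∂μ := by
          intro M; simp [cfun, h]
        have e2 : bfun f X μ v (N+1) x = ∫ d, bfun f X μ v N (f x d) ∂μ := by
          simp [bfun, h]
        rw [e1, e1, e2]
        have hi1 : Integrable (fun d => cfun f X μ w (N+1) (f x d)) μ :=
          hint _ Cw (cfun_measurable hf hX hw (N+1)) (fun y hy => hcB (N+1) y hy) x h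
        have hi2 : Integrable (fun d => cfun f X μ w N (f x d)) μ :=
          hint _ Cw (cfun_measurable hf hX hw N) (fun y hy => hcB N y hy) x h
        rw [← integral_sub hi1 hi2]
        refine integral_mono_ae (hi1.sub hi2)
          (hint _ Cv (bfun_measurable hf hX hv N) (fun y hy => hbb N y hy) x h) ?_
        exact hDae.mono fun d hd => ih _ (hreach x h d hd)
      · simp [cfun, bfun, h]
  -- telescoping
  have htel : ∀ N, ∀ x ∈ Xhat,
      cfun f X μ w N x - w x ≤ ∑ k ∈ Finset.range N, bfun f X μ v k x := by
    intro N
    induction N with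
    | zero => intro x hx; simp [cfun]
    | succ N ih =>
      intro x hx
      rw [Finset.sum_range_succ]
      have := hcd N x hx
      have := ih x hx
      linarith
  -- nonnegativity of v on X
  have hv0 : ∀ x ∈ X, 0 ≤ v x := by
    intro x hx
    by_contra hneg
    push_neg at hneg
    have hxh := hXXhat hx
    have hbound : ∀ N : ℕ, -(2 * Cw) ≤ (N : ℝ) * v x := by
      intro N
      have h1t := htel N x hxh
      have h2t : ∑ k ∈ Finset.range N, bfun f X μ v k x ≤ (N : ℝ) * v x := by
        calc ∑ k ∈ Finset.range N, bfun f X μ v k x ≤ ∑ _k ∈ Finset.range N, v x :=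
              Finset.sum_le_sum fun k _ => hbv k x hxh
          _ = (N : ℝ) * v x := by rw [Finset.sum_const, Finset.card_range, nsmul_eq_mul]
      have hc1 := hcB N x hxh
      have hc2 := hCw x hxh
      have : -(2 * Cw) ≤ cfun f X μ w N x - w x := by
        have := abs_le.mp hc1
        have := abs_le.mp hc2
        cases abs_le.mp hc1; cases abs_le.mp hc2; linarith
      linarith
    obtain ⟨N, hN⟩ := exists_nat_gt (2 * Cw / (-(v x)))
    have hvpos : 0 < -(v x) := by linarith
    have : 2 * Cw < (N : ℝ) * (-(v x)) := by
      rwa [div_lt_iff₀ hvpos] at hN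
    have := hbound N
    nlinarith
  -- pushforward of Pinf to finite products
  have hprojm : ∀ N : ℕ, Measurable (fun π : ℕ → Fin m → ℝ => fun i : Fin N => π i.val) :=
    fun N => measurable_pi_lambda _ fun i => measurable_pi_apply _
  have hmap : ∀ N : ℕ, Pinf.map (fun π => fun i : Fin N => π i.val) =
      Measure.pi (fun _ : Fin N => μ) := by
    intro N
    refine (Measure.pi_eq fun B hB => ?_).symm
    rw [Measure.map_apply (hprojm N) (MeasurableSet.univ_pi hB)]
    have hset : (fun π : ℕ → Fin m → ℝ => fun i : Fin N => π i.val) ⁻¹' (Set.univ.pi B) =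
        {π | ∀ i ∈ Finset.range N, π i ∈ (if h : i < N then B ⟨i, h⟩ else Set.univ)} := by
      ext π
      simp only [Set.mem_preimage, Set.mem_pi, Set.mem_univ, forall_true_left, Set.mem_setOf_eq,
        Finset.mem_range]
      constructor
      · intro h i hi
        rw [dif_pos hi]; exact h ⟨i, hi⟩
      · intro h i
        have := h i.val i.isLt
        rwa [dif_pos i.isLt, Fin.eta] at this
    rw [hset, hPinf (Finset.range N) _ (fun i => by
      by_cases h : i < N
      · simpa [h] using hB ⟨i, h⟩
      · simp [h])]
    rw [← Fin.prod_univ_eq_prod_range (fun i => μ (if h : i < N then B ⟨i, h⟩ else Set.univ)) N]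
    exact (Finset.prod_congr rfl fun i _ => by simp [i.isLt]).symm
  -- the finite-horizon exit events
  have hEvent : ∀ (N : ℕ) (x0 : Fin n → ℝ),
      Pinf {π | ∃ k, k < N ∧ traj f x0 π k ∈ Xhat \ X ∧ ∀ i, i < k → traj f x0 π i ∈ X} =
        gfun f X (Xhat \ X) μ N x0 := by
    intro N x0
    have hseteq : {π : ℕ → Fin m → ℝ |
        ∃ k, k < N ∧ traj f x0 π k ∈ Xhat \ X ∧ ∀ i, i < k → traj f x0 π i ∈ X} =
        (fun π => fun i : Fin N => π i.val) ⁻¹' exitSet f X (Xhat \ X) x0 N := by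
      ext π
      have hagree : ∀ k, k ≤ N →
          traj f x0 (extSeq (fun i : Fin N => π i.val)) k = traj f x0 π k := by
        intro k hk
        refine traj_congr f x0 _ _ k fun i hi => ?_
        simp only [extSeq, dif_pos (by omega : i < N)]
      simp only [Set.mem_preimage, exitSet, Set.mem_setOf_eq]
      constructor
      · rintro ⟨k, hkN, hkE, hkX⟩
        exact ⟨k, hkN, by rw [hagree k (by omega)]; exact hkE,
          fun i hi => by rw [hagree i (by omega)]; exact hkX i hi⟩
      · rintro ⟨k, hkN, hkE, hkX⟩
        refine ⟨k, hkN, by rw [hagree k (by omega)] at hkE; exact hkE,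
          fun i hi => by have := hkX i hi; rwa [hagree i (by omega)] at this⟩
    rw [hseteq, ← Measure.map_apply (hprojm N) (exitSet_measurable hf hX hEm x0 N), hmap N,
      pi_exitSet_eq_gfun hf hX hEm hdisj]
  have hgle : ∀ (N : ℕ) (x0 : Fin n → ℝ), gfun f X (Xhat \ X) μ N x0 ≤ 1 := by
    intro N x0
    rw [← pi_exitSet_eq_gfun hf hX hEm hdisj]
    exact prob_le_one
  have hgfin : ∀ (N : ℕ) (x0 : Fin n → ℝ), gfun f X (Xhat \ X) μ N x0 ≠ ⊤ :=
    fun N x0 => ne_top_of_le_ne_top ENNReal.one_ne_top (hgle N x0)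
  -- toReal of gfun bounded by v
  have hgv : ∀ N, ∀ x ∈ Xhat, (gfun f X (Xhat \ X) μ N x).toReal ≤ v x := by
    intro N
    induction N with
    | zero =>
      intro x hx
      by_cases h : x ∈ X
      · simpa [gfun] using hv0 x h
      · have := h4 x (hXE x hx h)
        simp only [gfun]
        simp only [ENNReal.toReal_zero]
        linarith
    | succ N ih =>
      intro x hx
      by_cases hxE2 : x ∈ Xhat \ X
      · simp only [gfun, if_pos hxE2, ENNReal.toReal_one]
        exact h4 x hxE2
      · have hxX : x ∈ X := by
          by_contra h
          exact hxE2 (hXE x hx h)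
        have hgeq : gfun f X (Xhat \ X) μ (N+1) x = ∫⁻ d, gfun f X (Xhat \ X) μ N (f x d) ∂μ := by
          simp [gfun, hxE2, hxX]
        rw [hgeq]
        have haem : AEMeasurable (fun d => gfun f X (Xhat \ X) μ N (f x d)) μ :=
          ((gfun_measurable hf hX hEm N).comp (hfx x)).aemeasurable
        rw [← integral_toReal haem (ae_of_all _ fun d =>
          lt_of_le_of_lt (hgle N _) ENNReal.one_lt_top)]
        have hi1 : Integrable (fun d => (gfun f X (Xhat \ X) μ N (f x d)).toReal) μ := by
          refine Integrable.mono' (integrable_const 1)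
            ((ENNReal.measurable_toReal.comp
              ((gfun_measurable hf hX hEm N).comp (hfx x))).aestronglyMeasurable)
            (ae_of_all _ fun d => ?_)
          rw [Real.norm_eq_abs, abs_of_nonneg ENNReal.toReal_nonneg]
          calc (gfun f X (Xhat \ X) μ N (f x d)).toReal ≤ (1 : ENNReal).toReal :=
                ENNReal.toReal_mono ENNReal.one_ne_top (hgle N _)
            _ = 1 := ENNReal.toReal_one
        refine le_trans (integral_mono_ae hi1 (hint _ Cv hv hCv x hxX) ?_) (h2' x hxX)
        exact hDae.mono fun d hd => ih _ (hreach x hxX d hd)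
  -- main bound
  have main : ∀ x0 ∈ X,
      (Pinf {π : ℕ → Fin m → ℝ |
          ∃ k : ℕ, traj f x0 π k ∈ Xhat \ X ∧ ∀ i < k, traj f x0 π i ∈ X}).toReal ≤ v x0 := by
    intro x0 hx0
    have hunion : {π : ℕ → Fin m → ℝ |
        ∃ k : ℕ, traj f x0 π k ∈ Xhat \ X ∧ ∀ i < k, traj f x0 π i ∈ X} =
        ⋃ N : ℕ, {π | ∃ k, k < N ∧ traj f x0 π k ∈ Xhat \ X ∧
          ∀ i, i < k → traj f x0 π i ∈ X} := by
      ext π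
      simp only [Set.mem_setOf_eq, Set.mem_iUnion]
      constructor
      · rintro ⟨k, hk1, hk2⟩
        exact ⟨k + 1, k, by omega, hk1, fun i hi => hk2 i hi⟩
      · rintro ⟨N, k, _, hk1, hk2⟩
        exact ⟨k, hk1, fun i hi => hk2 i hi⟩
    have hmono : Monotone (fun N : ℕ => {π : ℕ → Fin m → ℝ | ∃ k, k < N ∧
        traj f x0 π k ∈ Xhat \ X ∧ ∀ i, i < k → traj f x0 π i ∈ X}) := by
      intro N M hNM π hπ
      obtain ⟨k, hk, h1', h2'⟩ := hπ
      exact ⟨k, by omega, h1', h2'⟩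
    rw [hunion, hmono.directed_le.measure_iUnion]
    have hsup : (⨆ N : ℕ, Pinf {π : ℕ → Fin m → ℝ | ∃ k, k < N ∧
        traj f x0 π k ∈ Xhat \ X ∧ ∀ i, i < k → traj f x0 π i ∈ X}) ≤
        ENNReal.ofReal (v x0) := by
      refine iSup_le fun N => ?_
      rw [hEvent N x0]
      calc gfun f X (Xhat \ X) μ N x0 =
            ENNReal.ofReal ((gfun f X (Xhat \ X) μ N x0).toReal) :=
            (ENNReal.ofReal_toReal (hgfin N x0)).symm
        _ ≤ ENNReal.ofReal (v x0) :=
            ENNReal.ofReal_le_ofReal (hgv N x0 (hXXhat hx0))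
    exact ENNReal.toReal_le_of_le_ofReal (hv0 x0 hx0) hsup
  refine ⟨main, fun x0 hx0 => ?_⟩
  have hxX : x0 ∈ X := hX0X hx0
  have hb1 : (Pinf {π : ℕ → Fin m → ℝ |
      ∃ k : ℕ, traj f x0 π k ∈ Xhat \ X ∧ ∀ i < k, traj f x0 π i ∈ X}).toReal ≤ 1 - ε₁ :=
    (main x0 hxX).trans (h1 x0 hx0)
  refine ⟨hb1, ?_⟩
  -- safety bound
  have hSafem : MeasurableSet {π : ℕ → Fin m → ℝ | ∀ k : ℕ, traj f x0 π k ∈ X} := by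
    have : {π : ℕ → Fin m → ℝ | ∀ k : ℕ, traj f x0 π k ∈ X} =
        ⋂ k : ℕ, (fun π => traj f x0 π k) ⁻¹' X := by
      ext π; simp
    rw [this]
    exact MeasurableSet.iInter fun k => (traj_measurable hf x0 k) hX
  have hallD : ∀ᵐ π ∂Pinf, ∀ i, π i ∈ D := by
    rw [ae_all_iff]
    intro i
    have h1' : Pinf {π : ℕ → Fin m → ℝ | π i ∈ D} = 1 := by
      have := hPinf {i} (fun _ => D) (fun _ => hD)
      simpa [hμD] using this
    have hmeas : MeasurableSet {π : ℕ → Fin m → ℝ | π i ∈ D} := measurable_pi_apply i hD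
    rw [ae_iff]
    have hceq : {π : ℕ → Fin m → ℝ | ¬ π i ∈ D} = {π : ℕ → Fin m → ℝ | π i ∈ D}ᶜ := rfl
    rw [hceq, measure_compl hmeas (measure_ne_top _ _), h1', measure_univ, tsub_self]
  have hNull : Pinf {π : ℕ → Fin m → ℝ | ¬ ∀ i, π i ∈ D} = 0 := ae_iff.mp hallD
  have hsubset : ∀ π : ℕ → Fin m → ℝ, (∀ i, π i ∈ D) →
      π ∉ {π : ℕ → Fin m → ℝ |
        ∃ k : ℕ, traj f x0 π k ∈ Xhat \ X ∧ ∀ i < k, traj f x0 π i ∈ X} →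
      ∀ k : ℕ, traj f x0 π k ∈ X := by
    intro π hDmem hnot k
    by_contra hk
    have hex : ∃ j, traj f x0 π j ∉ X := ⟨k, hk⟩
    have hj := Nat.find_spec hex
    have hj0 : Nat.find hex ≠ 0 := by
      intro h
      rw [h] at hj
      exact hj hxX
    obtain ⟨j', hj'⟩ : ∃ j', Nat.find hex = j' + 1 := ⟨Nat.find hex - 1, by omega⟩
    have hjX : traj f x0 π j' ∈ X := by
      have := Nat.find_min hex (m := j') (by omega)
      exact not_not.mp this
    apply hnot
    refine ⟨j' + 1, ?_, fun i hi => ?_⟩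
    · constructor
      · show traj f x0 π (j' + 1) ∈ Xhat
        have : traj f x0 π (j' + 1) = f (traj f x0 π j') (π j') := rfl
        rw [this]
        exact hreach _ hjX _ (hDmem j')
      · rw [← hj']
        exact hj
    · have := Nat.find_min hex (m := i) (by omega)
      exact not_not.mp this
  have hcsub : {π : ℕ → Fin m → ℝ | ∀ k : ℕ, traj f x0 π k ∈ X}ᶜ ⊆
      {π : ℕ → Fin m → ℝ |
        ∃ k : ℕ, traj f x0 π k ∈ Xhat \ X ∧ ∀ i < k, traj f x0 π i ∈ X} ∪
      {π : ℕ → Fin m → ℝ | ¬ ∀ i, π i ∈ D} := by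
    intro π hπ
    by_cases hd : ∀ i, π i ∈ D
    · left
      by_contra hne
      exact hπ (hsubset π hd hne)
    · right
      exact hd
  have hcb : Pinf {π : ℕ → Fin m → ℝ | ∀ k : ℕ, traj f x0 π k ∈ X}ᶜ ≤
      Pinf {π : ℕ → Fin m → ℝ |
        ∃ k : ℕ, traj f x0 π k ∈ Xhat \ X ∧ ∀ i < k, traj f x0 π i ∈ X} := by
    calc Pinf {π : ℕ → Fin m → ℝ | ∀ k : ℕ, traj f x0 π k ∈ X}ᶜ ≤
        Pinf ({π : ℕ → Fin m → ℝ |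
          ∃ k : ℕ, traj f x0 π k ∈ Xhat \ X ∧ ∀ i < k, traj f x0 π i ∈ X} ∪
          {π : ℕ → Fin m → ℝ | ¬ ∀ i, π i ∈ D}) := measure_mono hcsub
      _ ≤ Pinf {π : ℕ → Fin m → ℝ |
            ∃ k : ℕ, traj f x0 π k ∈ Xhat \ X ∧ ∀ i < k, traj f x0 π i ∈ X} +
          Pinf {π : ℕ → Fin m → ℝ | ¬ ∀ i, π i ∈ D} := measure_union_le _ _
      _ = Pinf {π : ℕ → Fin m → ℝ |
            ∃ k : ℕ, traj f x0 π k ∈ Xhat \ X ∧ ∀ i < k, traj f x0 π i ∈ X} := by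
          rw [hNull, add_zero]
  have hsum : Pinf {π : ℕ → Fin m → ℝ | ∀ k : ℕ, traj f x0 π k ∈ X} +
      Pinf {π : ℕ → Fin m → ℝ | ∀ k : ℕ, traj f x0 π k ∈ X}ᶜ = 1 := by
    rw [measure_add_measure_compl hSafem, measure_univ]
  have hsumr : (Pinf {π : ℕ → Fin m → ℝ | ∀ k : ℕ, traj f x0 π k ∈ X}).toReal +
      (Pinf {π : ℕ → Fin m → ℝ | ∀ k : ℕ, traj f x0 π k ∈ X}ᶜ).toReal = 1 := by
    rw [← ENNReal.toReal_add (measure_ne_top _ _) (measure_ne_top _ _), hsum]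
    exact ENNReal.toReal_one
  have hcbr : (Pinf {π : ℕ → Fin m → ℝ | ∀ k : ℕ, traj f x0 π k ∈ X}ᶜ).toReal ≤
      (Pinf {π : ℕ → Fin m → ℝ |
        ∃ k : ℕ, traj f x0 π k ∈ Xhat \ X ∧ ∀ i < k, traj f x0 π i ∈ X}).toReal :=
    ENNReal.toReal_mono (measure_ne_top _ _) hcb
  linarith
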